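/- arXiv:2109.00054 — 2 statements merged into one kernel-verified Lean document; each statement's English description precedes it below -/
import Mathlib

section
/- Let 𝔄 be a dual Banach algebra and let E be a Banach 𝔄-bimodule. For every f ∈ E*, the map j_E ∘ ad_f : 𝔄 → σwc(E)* is continuous from the w*-topology σ(𝔄, 𝔄_*) on 𝔄 to the w*-topology σ(σwc(E)*, σwc(E)) on σwc(E)*. -/
noncomputable section

open Filter Topology

universe u

/-- The locally convex topology on `A` induced by a pairing `p : A → X → ℂ`,
i.e. the initial topology for the family of maps `a ↦ p a x`, `x : X`. -/
def topOfPairing {A X : Type*} (p : A → X → ℂ) : TopologicalSpace A :=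
  TopologicalSpace.induced p Pi.topologicalSpace

theorem continuous_topOfPairing_iff {B A X : Type*} {tB : TopologicalSpace B}
    {p : A → X → ℂ} {f : B → A} :
    Continuous[tB, topOfPairing p] f ↔
      ∀ x, Continuous[tB, inferInstance] fun b => p (f b) x := by
  rw [topOfPairing, continuous_induced_rng, continuous_pi_iff]
  exact Iff.rfl

theorem topOfPairing_eval_cont {A X : Type*} (p : A → X → ℂ) (x : X) :
    Continuous[topOfPairing p, inferInstance] fun a => p a x :=
  continuous_topOfPairing_iff.1 (@continuous_id _ (topOfPairing p)) x

/-- The weak topology `σ(E, E*)` on a normed space `E`. -/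
def weakTop (E : Type u) [NormedAddCommGroup E] [NormedSpace ℂ E] : TopologicalSpace E :=
  topOfPairing fun x (φ : E →L[ℂ] ℂ) => φ x

/-- The weak-* topology `σ(E*, E)` on the dual of a normed space `E`. -/
def wstarD (E : Type u) [NormedAddCommGroup E] [NormedSpace ℂ E] :
    TopologicalSpace (E →L[ℂ] ℂ) :=
  topOfPairing fun Λ (x : E) => Λ x

section Core

variable {A X : Type u} [NormedAddCommGroup A] [NormedSpace ℂ A]
  [NormedAddCommGroup X] [NormedSpace ℂ X]

/-- The weak-* topology `σ(A, X)` on a dual Banach space `A`, where the duality with the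
predual `X` is implemented by an isometric linear isomorphism `ρ : A ≅ X*`. -/
def wstar (ρ : A ≃ₗᵢ[ℂ] (X →L[ℂ] ℂ)) : TopologicalSpace A :=
  topOfPairing fun a (x : X) => ρ a x

theorem weakTop_cont_iff {B : Type*} {tB : TopologicalSpace B} {E : Type u}
    [NormedAddCommGroup E] [NormedSpace ℂ E] {f : B → E} :
    Continuous[tB, weakTop E] f ↔
      ∀ φ : E →L[ℂ] ℂ, Continuous[tB, inferInstance] fun b => φ (f b) :=
  continuous_topOfPairing_iff

namespace WeakCont

variable {B : Type*} {E F : Type u} [NormedAddCommGroup E] [NormedSpace ℂ E]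
  [NormedAddCommGroup F] [NormedSpace ℂ F]

theorem clm_comp (tB : TopologicalSpace B) (L : E →L[ℂ] F) {f : B → E}
    (hf : Continuous[tB, weakTop E] f) : Continuous[tB, weakTop F] fun b => L (f b) :=
  weakTop_cont_iff.2 fun φ => weakTop_cont_iff.1 hf (φ.comp L)

theorem add (tB : TopologicalSpace B) {f g : B → E} (hf : Continuous[tB, weakTop E] f)
    (hg : Continuous[tB, weakTop E] g) : Continuous[tB, weakTop E] fun b => f b + g b := by
  refine weakTop_cont_iff.2 fun φ => ?_
  letI := tB
  have h := (weakTop_cont_iff.1 hf φ).add (weakTop_cont_iff.1 hg φ)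
  simp only [map_add]
  exact h

theorem const_smul (tB : TopologicalSpace B) {f : B → E} (hf : Continuous[tB, weakTop E] f)
    (c : ℂ) : Continuous[tB, weakTop E] fun b => c • f b := by
  refine weakTop_cont_iff.2 fun φ => ?_
  letI := tB
  have h := (weakTop_cont_iff.1 hf φ).const_smul c
  simp only [map_smul, smul_eq_mul]
  exact h

theorem zero (tB : TopologicalSpace B) :
    Continuous[tB, weakTop E] fun _ : B => (0 : E) := by
  refine weakTop_cont_iff.2 fun φ => ?_
  letI := tB
  simpa using (continuous_const : Continuous fun _ : B => (0 : ℂ))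

end WeakCont

/-- A Banach algebra structure on a normed space `A`: an associative continuous bilinear
multiplication satisfying `‖a * b‖ ≤ ‖a‖ * ‖b‖`. -/
structure BanachAlgStr (A : Type u) [NormedAddCommGroup A] [NormedSpace ℂ A] where
  mul : A →L[ℂ] A →L[ℂ] A
  mul_assoc : ∀ a b c, mul (mul a b) c = mul a (mul b c)
  norm_mul_le : ∀ a b, ‖mul a b‖ ≤ ‖a‖ * ‖b‖

/-- `A`, with predual `X` (via `ρ`) and multiplication `S`, is a dual Banach algebra:
the multiplication is separately continuous for the weak-* topology `σ(A, X)`. -/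
structure IsDualBanachAlgebra (ρ : A ≃ₗᵢ[ℂ] (X →L[ℂ] ℂ)) (S : BanachAlgStr A) : Prop where
  mul_left : ∀ a, Continuous[wstar ρ, wstar ρ] fun b => S.mul a b
  mul_right : ∀ a, Continuous[wstar ρ, wstar ρ] fun b => S.mul b a

/-- A Banach `A`-bimodule structure (for the Banach algebra `(A, S)`) on a normed space `E`:
continuous bilinear left and right actions `l`, `r` which commute and are associative
for the multiplication `S.mul`. -/
structure BanachBimodule {A : Type u} [NormedAddCommGroup A] [NormedSpace ℂ A]
    (S : BanachAlgStr A) (E : Type u) [NormedAddCommGroup E] [NormedSpace ℂ E] where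
  l : A →L[ℂ] E →L[ℂ] E
  r : A →L[ℂ] E →L[ℂ] E
  l_mul : ∀ a b x, l (S.mul a b) x = l a (l b x)
  r_mul : ∀ a b x, r (S.mul a b) x = r b (r a x)
  lr_comm : ∀ a b x, l a (r b x) = r b (l a x)

/-- `A` as a Banach bimodule over itself, via multiplication. -/
def BanachAlgStr.toBimodule (S : BanachAlgStr A) : BanachBimodule S A where
  l := S.mul
  r := S.mul.flip
  l_mul := fun a b x => S.mul_assoc a b x
  r_mul := fun a b x => (S.mul_assoc x a b).symm
  lr_comm := fun a b x => (S.mul_assoc a x b).symm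

variable {E : Type u} [NormedAddCommGroup E] [NormedSpace ℂ E]

/-- `σwc(E)`: the set of `x ∈ E` such that the maps `a ↦ a · x` and `a ↦ x · a` are
continuous from the weak-* topology on `A` into the weak topology on `E`.
It is a (closed) linear subspace of `E`. -/
def sigmaWC (ρ : A ≃ₗᵢ[ℂ] (X →L[ℂ] ℂ)) {S : BanachAlgStr A} (M : BanachBimodule S E) :
    Submodule ℂ E where
  carrier := {x | Continuous[wstar ρ, weakTop E] (fun a => M.l a x) ∧
    Continuous[wstar ρ, weakTop E] fun a => M.r a x}
  add_mem' := by
    rintro x y ⟨h1, h2⟩ ⟨h3, h4⟩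
    constructor
    · simp only [map_add]
      exact WeakCont.add _ h1 h3
    · simp only [map_add]
      exact WeakCont.add _ h2 h4
  zero_mem' := by
    constructor
    · simp only [map_zero]
      exact WeakCont.zero _
    · simp only [map_zero]
      exact WeakCont.zero _
  smul_mem' := by
    rintro c x ⟨h1, h2⟩
    constructor
    · simp only [map_smul]
      exact WeakCont.const_smul _ h1 c
    · simp only [map_smul]
      exact WeakCont.const_smul _ h2 c

theorem smulL_mem_sigmaWC {ρ : A ≃ₗᵢ[ℂ] (X →L[ℂ] ℂ)} {S : BanachAlgStr A}
    {M : BanachBimodule S E} (hA : IsDualBanachAlgebra ρ S) {x : E}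
    (hx : x ∈ sigmaWC ρ M) (a : A) : M.l a x ∈ sigmaWC ρ M := by
  obtain ⟨h1, h2⟩ := hx
  constructor
  · have he : (fun c => M.l c (M.l a x)) = fun c => M.l (S.mul c a) x :=
      funext fun c => (M.l_mul c a x).symm
    rw [he]
    exact @Continuous.comp A A E (wstar ρ) (wstar ρ) (weakTop E) _ _ h1 (hA.mul_right a)
  · have he : (fun c => M.r c (M.l a x)) = fun c => M.l a (M.r c x) :=
      funext fun c => (M.lr_comm a c x).symm
    rw [he]
    exact WeakCont.clm_comp _ (M.l a) h2

theorem smulR_mem_sigmaWC {ρ : A ≃ₗᵢ[ℂ] (X →L[ℂ] ℂ)} {S : BanachAlgStr A}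
    {M : BanachBimodule S E} (hA : IsDualBanachAlgebra ρ S) {x : E}
    (hx : x ∈ sigmaWC ρ M) (a : A) : M.r a x ∈ sigmaWC ρ M := by
  obtain ⟨h1, h2⟩ := hx
  constructor
  · have he : (fun c => M.l c (M.r a x)) = fun c => M.r a (M.l c x) :=
      funext fun c => M.lr_comm c a x
    rw [he]
    exact WeakCont.clm_comp _ (M.r a) h1
  · have he : (fun c => M.r c (M.r a x)) = fun c => M.r (S.mul a c) x :=
      funext fun c => (M.r_mul a c x).symm
    rw [he]
    exact @Continuous.comp A A E (wstar ρ) (wstar ρ) (weakTop E) _ _ h2 (hA.mul_left a)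

/-- `j_E : E* → σwc(E)*`, restriction of functionals (the adjoint of the inclusion
`σwc(E) ↪ E`). -/
def jmap (ρ : A ≃ₗᵢ[ℂ] (X →L[ℂ] ℂ)) {S : BanachAlgStr A} (M : BanachBimodule S E)
    (φ : E →L[ℂ] ℂ) : ↥(sigmaWC ρ M) →L[ℂ] ℂ :=
  φ.comp (sigmaWC ρ M).subtypeL

/-- The left dual action of `A` on `σwc(E)*`: `(a · Λ)(x) = Λ(x · a)`. -/
def dualL {ρ : A ≃ₗᵢ[ℂ] (X →L[ℂ] ℂ)} {S : BanachAlgStr A} {M : BanachBimodule S E}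
    (hA : IsDualBanachAlgebra ρ S) (a : A) (Λ : ↥(sigmaWC ρ M) →L[ℂ] ℂ) :
    ↥(sigmaWC ρ M) →L[ℂ] ℂ :=
  Λ.comp (ContinuousLinearMap.codRestrict ((M.r a).comp (sigmaWC ρ M).subtypeL)
    (sigmaWC ρ M) fun x => smulR_mem_sigmaWC hA x.2 a)

/-- The right dual action of `A` on `σwc(E)*`: `(Λ · a)(x) = Λ(a · x)`. -/
def dualR {ρ : A ≃ₗᵢ[ℂ] (X →L[ℂ] ℂ)} {S : BanachAlgStr A} {M : BanachBimodule S E}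
    (hA : IsDualBanachAlgebra ρ S) (a : A) (Λ : ↥(sigmaWC ρ M) →L[ℂ] ℂ) :
    ↥(sigmaWC ρ M) →L[ℂ] ℂ :=
  Λ.comp (ContinuousLinearMap.codRestrict ((M.l a).comp (sigmaWC ρ M).subtypeL)
    (sigmaWC ρ M) fun x => smulL_mem_sigmaWC hA x.2 a)

/-- `D : A → E*` is a derivation for the dual bimodule actions of `A` on `E*`,
i.e. `D(ab) = a · D(b) + D(a) · b`, where `(a · φ)(x) = φ(x · a)` and
`(φ · a)(x) = φ(a · x)`. -/
def IsDerivationToDual (S : BanachAlgStr A) (M : BanachBimodule S E)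
    (D : A →L[ℂ] (E →L[ℂ] ℂ)) : Prop :=
  ∀ a b, D (S.mul a b) = (D b).comp (M.r a) + (D a).comp (M.l b)

/-- `D : A → E` is a derivation for the bimodule actions of `A` on `E`:
`D(ab) = a · D(b) + D(a) · b`. -/
def IsDerivationInto (S : BanachAlgStr A) (M : BanachBimodule S E)
    (D : A →L[ℂ] E) : Prop :=
  ∀ a b, D (S.mul a b) = M.l a (D b) + M.r b (D a)

/-- The dual Banach algebra `(A, ρ, S)` is weakly Connes amenable: for every derivation
`D : A → A*` such that `j_A ∘ D : A → σwc(A)*` is weak-*–weak-* continuous, the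
derivation `j_A ∘ D` is inner, i.e. of the form `a ↦ a · Φ - Φ · a` for some
`Φ ∈ σwc(A)*`. -/
def WeaklyConnesAmenable (ρ : A ≃ₗᵢ[ℂ] (X →L[ℂ] ℂ)) (S : BanachAlgStr A)
    (hA : IsDualBanachAlgebra ρ S) : Prop :=
  ∀ D : A →L[ℂ] (A →L[ℂ] ℂ), IsDerivationToDual S S.toBimodule D →
    Continuous[wstar ρ, wstarD ↥(sigmaWC ρ S.toBimodule)]
      (fun a => jmap ρ S.toBimodule (D a)) →
    ∃ Φ, ∀ a, jmap ρ S.toBimodule (D a) = dualL hA a Φ - dualR hA a Φ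

end Core

section SigmaWC

variable {A X E : Type u} [NormedAddCommGroup A] [NormedSpace ℂ A]
  [NormedAddCommGroup X] [NormedSpace ℂ X] [NormedAddCommGroup E] [NormedSpace ℂ E]
  {ρ : A ≃ₗᵢ[ℂ] (X →L[ℂ] ℂ)} {S : BanachAlgStr A} {M : BanachBimodule S E}

theorem continuous_apply_l_of_mem_sigmaWC {x : E} (hx : x ∈ sigmaWC ρ M) (φ : E →L[ℂ] ℂ) :
    Continuous[wstar ρ, inferInstance] fun a => φ (M.l a x) :=
  weakTop_cont_iff.1 hx.1 φ

theorem continuous_apply_r_of_mem_sigmaWC {x : E} (hx : x ∈ sigmaWC ρ M) (φ : E →L[ℂ] ℂ) :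
    Continuous[wstar ρ, inferInstance] fun a => φ (M.r a x) :=
  weakTop_cont_iff.1 hx.2 φ

theorem continuous_jmap_iff {B : Type*} {tB : TopologicalSpace B} {g : B → E →L[ℂ] ℂ} :
    Continuous[tB, wstarD (sigmaWC ρ M)] (fun b => jmap ρ M (g b)) ↔
      ∀ x ∈ sigmaWC ρ M, Continuous[tB, inferInstance] fun b => g b x :=
  continuous_topOfPairing_iff.trans Subtype.forall

end SigmaWC

theorem jmap_comp_ad_wstar_continuous_general {A X : Type u} [NormedAddCommGroup A] [NormedSpace ℂ A]
    [NormedAddCommGroup X] [NormedSpace ℂ X]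
    {E : Type u} [NormedAddCommGroup E] [NormedSpace ℂ E]
    (ρ : A ≃ₗᵢ[ℂ] (X →L[ℂ] ℂ)) (S : BanachAlgStr A)
    (M : BanachBimodule S E) (f : E →L[ℂ] ℂ) :
    Continuous[wstar ρ, wstarD ↥(sigmaWC ρ M)]
      (fun a => jmap ρ M (f.comp (M.r a) - f.comp (M.l a))) := by
  refine continuous_jmap_iff.2 fun x hx => ?_
  let _ := wstar ρ
  exact (continuous_apply_r_of_mem_sigmaWC hx f).sub (continuous_apply_l_of_mem_sigmaWC hx f)

/-- **Lemma 3.1 (iii).** Let `𝔄` be a dual Banach algebra and `E` a Banach `𝔄`-bimodule.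
For every `f ∈ E*`, the map `j_E ∘ ad_f : 𝔄 → σwc(E)*` is continuous from the weak-*
topology `σ(𝔄, 𝔄_*)` to the weak-* topology `σ(σwc(E)*, σwc(E))`. -/
theorem jmap_comp_ad_wstar_continuous {A X : Type u} [NormedAddCommGroup A] [NormedSpace ℂ A] [CompleteSpace A]
    [NormedAddCommGroup X] [NormedSpace ℂ X] [CompleteSpace X]
    {E : Type u} [NormedAddCommGroup E] [NormedSpace ℂ E] [CompleteSpace E]
    (ρ : A ≃ₗᵢ[ℂ] (X →L[ℂ] ℂ)) (S : BanachAlgStr A) (hA : IsDualBanachAlgebra ρ S)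
    (M : BanachBimodule S E) (f : E →L[ℂ] ℂ) :
    Continuous[wstar ρ, wstarD ↥(sigmaWC ρ M)]
      (fun a => jmap ρ M (f.comp (M.r a) - f.comp (M.l a))) :=
  jmap_comp_ad_wstar_continuous_general ρ S M f
end
end

section
/- Let X be a complex Banach space, let V = X* with dim V ≥ 2, and let f ∈ V* be a nonzero w*-continuous functional with ‖f‖ ≤ 1. Equip V with the product a b := f(a)·b, making V a dual Banach algebra V_f with predual X. Then V_f is not w*-approximately Connes amenable: there exist a normal dual Banach V_f-bimodule E and a w*-w* continuous derivation D : V_f → E that is not w*-approximately inner. -/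
noncomputable section

open Filter Topology

universe u

section Connes

variable {A X : Type u} [NormedAddCommGroup A] [NormedSpace ℂ A]
  [NormedAddCommGroup X] [NormedSpace ℂ X]

/-- A dual Banach `A`-bimodule `E = F*` is normal if the module actions of `A` on `E` are
weak-*–weak-* continuous. -/
def IsNormal (ρ : A ≃ₗᵢ[ℂ] (X →L[ℂ] ℂ)) {S : BanachAlgStr A} {F : Type u}
    [NormedAddCommGroup F] [NormedSpace ℂ F] (M : BanachBimodule S (F →L[ℂ] ℂ)) : Prop :=
  ∀ x, Continuous[wstar ρ, wstarD F] (fun a => M.l a x) ∧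
    Continuous[wstar ρ, wstarD F] fun a => M.r a x

/-- The dual Banach algebra `(A, ρ, S)` is Connes amenable: for every normal dual Banach
`A`-bimodule `E = F*`, every weak-*–weak-* continuous derivation `D : A → E` is inner. -/
def ConnesAmenable (ρ : A ≃ₗᵢ[ℂ] (X →L[ℂ] ℂ)) (S : BanachAlgStr A) : Prop :=
  ∀ (F : Type u) [NormedAddCommGroup F] [NormedSpace ℂ F] [CompleteSpace F],
    ∀ M : BanachBimodule S (F →L[ℂ] ℂ), IsNormal ρ M →
      ∀ D : A →L[ℂ] (F →L[ℂ] ℂ), IsDerivationInto S M D →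
        Continuous[wstar ρ, wstarD F] (fun a => D a) →
        ∃ x, ∀ a, D a = M.l a x - M.r a x

end Connes

section Approx

variable {A X : Type u} [NormedAddCommGroup A] [NormedSpace ℂ A]
  [NormedAddCommGroup X] [NormedSpace ℂ X]

/-- `D : A → E` is `w*`-approximately inner for the module actions `l`, `r` on `E` and the
weak-* topology `tE` on `E`: there is a net `(g_α)` in `E` with
`D(a) = w*-lim_α (a · g_α - g_α · a)` for every `a`. -/
def WstarApproxInner {A' : Type u} {E' : Type u} [AddCommGroup E']
    (tE : TopologicalSpace E') (l r : A' → E' → E') (D : A' → E') : Prop :=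
  ∃ (ι : Type u) (fl : Filter ι), fl.NeBot ∧ ∃ g : ι → E',
    ∀ a, Filter.Tendsto (fun i => l a (g i) - r a (g i)) fl (@nhds _ tE (D a))

/-- The dual Banach algebra `(A, ρ, S)` is `w*`-approximately Connes amenable: every
weak-*–weak-* continuous derivation into a normal dual Banach `A`-bimodule `E = F*`
is `w*`-approximately inner. -/
def WstarApproxConnesAmenable (ρ : A ≃ₗᵢ[ℂ] (X →L[ℂ] ℂ)) (S : BanachAlgStr A) : Prop :=
  ∀ (F : Type u) [NormedAddCommGroup F] [NormedSpace ℂ F] [CompleteSpace F],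
    ∀ M : BanachBimodule S (F →L[ℂ] ℂ), IsNormal ρ M →
      ∀ D : A →L[ℂ] (F →L[ℂ] ℂ), IsDerivationInto S M D →
        Continuous[wstar ρ, wstarD F] (fun a => D a) →
        WstarApproxInner (wstarD F) (fun a x => M.l a x) (fun a x => M.r a x)
          (fun a => D a)

/-- The dual Banach algebra `(A, ρ, S)` is `w*`-approximately weakly Connes amenable: for
every derivation `D : A → A*` such that `j_A ∘ D : A → σwc(A)*` is weak-*–weak-*
continuous, the derivation `j_A ∘ D` is `w*`-approximately inner. -/
def WstarApproxWeaklyConnesAmenable (ρ : A ≃ₗᵢ[ℂ] (X →L[ℂ] ℂ)) (S : BanachAlgStr A)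
    (hA : IsDualBanachAlgebra ρ S) : Prop :=
  ∀ D : A →L[ℂ] (A →L[ℂ] ℂ), IsDerivationToDual S S.toBimodule D →
    Continuous[wstar ρ, wstarD ↥(sigmaWC ρ S.toBimodule)]
      (fun a => jmap ρ S.toBimodule (D a)) →
    WstarApproxInner (wstarD ↥(sigmaWC ρ S.toBimodule))
      (fun a Λ => dualL hA a Λ) (fun a Λ => dualR hA a Λ)
      (fun a => jmap ρ S.toBimodule (D a))

end Approx

section Vf

/-- The Banach algebra `V_f`: `V = X*` equipped with the product `a * b := f(a) • b`,
where `f` is the (`w*`-continuous, norm at most one) functional of evaluation at a point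
`x₀ ∈ X` with `‖x₀‖ ≤ 1`. -/
def VfStr (X : Type u) [NormedAddCommGroup X] [NormedSpace ℂ X] (x₀ : X)
    (h : ‖x₀‖ ≤ 1) : BanachAlgStr (X →L[ℂ] ℂ) where
  mul := (NormedSpace.inclusionInDoubleDual ℂ X x₀).smulRight
    (ContinuousLinearMap.id ℂ (X →L[ℂ] ℂ))
  mul_assoc := by
    intro a b c
    simp [ContinuousLinearMap.smulRight_apply, ContinuousLinearMap.smul_apply,
      NormedSpace.dual_def, smul_smul, mul_comm]
  norm_mul_le := by
    intro a b
    have he : ((NormedSpace.inclusionInDoubleDual ℂ X x₀).smulRight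
        (ContinuousLinearMap.id ℂ (X →L[ℂ] ℂ))) a b = a x₀ • b := by
      simp [NormedSpace.dual_def]
    rw [he]
    calc ‖a x₀ • b‖ ≤ ‖a x₀‖ * ‖b‖ := ContinuousLinearMap.opNorm_smul_le _ _
      _ ≤ (‖a‖ * ‖x₀‖) * ‖b‖ :=
          mul_le_mul_of_nonneg_right (a.le_opNorm x₀) (norm_nonneg b)
      _ ≤ ‖a‖ * ‖b‖ :=
          mul_le_mul_of_nonneg_right (mul_le_of_le_one_right (norm_nonneg a) h)
            (norm_nonneg b)

theorem VfStr_mul_apply {X : Type u} [NormedAddCommGroup X] [NormedSpace ℂ X] {x₀ : X}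
    {h : ‖x₀‖ ≤ 1} (a b : X →L[ℂ] ℂ) : (VfStr X x₀ h).mul a b = a x₀ • b := by
  simp [VfStr, NormedSpace.dual_def]

end Vf

/-! For any dual Banach algebra `A = X*`, make `A` a normal dual bimodule over itself by
letting `A` act by multiplication on the left and by zero on the right. The identity map is then
a `w*`-continuous derivation, and for every net `(g_α)` we get `a · g_α - g_α · a = a g_α`. If
`a` is a left annihilator, these commutators vanish, so the derivation can only be
`w*`-approximately inner if `a = 0`. In `V_f` every `a` with `a(x₀) = 0` is a left annihilator,
and such a nonzero `a` exists as soon as `dim V ≥ 2`. -/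

theorem exists_ne_zero_apply_eq_zero_of_two_le_rank {K V : Type*} [Field K] [AddCommGroup V]
    [Module K V] (φ : V →ₗ[K] K) (h : 2 ≤ Module.rank K V) : ∃ v ≠ 0, φ v = 0 := by
  by_contra! hker
  have hinj : Function.Injective φ :=
    (injective_iff_map_eq_zero φ).2 fun v hv => by_contra fun hv0 => hker v hv0 hv
  have hrank := φ.lift_rank_le_of_injective hinj
  rw [Module.rank_self, Cardinal.lift_one, Cardinal.lift_le_one_iff] at hrank
  exact absurd (h.trans hrank) (by norm_num)

theorem t2Space_topOfPairing {A X : Type*} {p : A → X → ℂ} (hp : Function.Injective p) :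
    @T2Space A (topOfPairing p) :=
  @T2Space.of_injective_continuous _ _ (topOfPairing p) _ _ _ hp continuous_induced_dom

theorem t2Space_wstarD (E : Type u) [NormedAddCommGroup E] [NormedSpace ℂ E] :
    @T2Space _ (wstarD E) :=
  t2Space_topOfPairing fun _ _ h => ContinuousLinearMap.ext (congrFun h)

theorem WstarApproxInner.apply_eq_zero_of_act_eq_zero {A E : Type u} [AddCommGroup E]
    {tE : TopologicalSpace E} [@T2Space E tE] {l r : A → E → E} {D : A → E}
    (h : WstarApproxInner tE l r D) {a : A} (hl : ∀ x, l a x = 0) (hr : ∀ x, r a x = 0) :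
    D a = 0 := by
  obtain ⟨ι, fl, hfl, g, hg⟩ := h
  have hlim := hg a
  simp only [hl, hr, sub_zero] at hlim
  exact (tendsto_const_nhds_iff.1 hlim).symm

section LeftBimodule

variable {A : Type u} [NormedAddCommGroup A] [NormedSpace ℂ A]

def BanachAlgStr.toLeftBimodule (S : BanachAlgStr A) : BanachBimodule S A where
  l := S.mul
  r := 0
  l_mul := S.mul_assoc
  r_mul _ _ _ := rfl
  lr_comm _ _ _ := by simp

theorem BanachAlgStr.isDerivationInto_id_toLeftBimodule (S : BanachAlgStr A) :
    IsDerivationInto S S.toLeftBimodule (ContinuousLinearMap.id ℂ A) := fun a b => by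
  simp [BanachAlgStr.toLeftBimodule]

variable {X : Type u} [NormedAddCommGroup X] [NormedSpace ℂ X]

theorem IsDualBanachAlgebra.isNormal_toLeftBimodule {S : BanachAlgStr (X →L[ℂ] ℂ)}
    (hA : IsDualBanachAlgebra (LinearIsometryEquiv.refl ℂ (X →L[ℂ] ℂ)) S) :
    IsNormal (LinearIsometryEquiv.refl ℂ (X →L[ℂ] ℂ)) S.toLeftBimodule := fun x =>
  ⟨hA.mul_right x, @continuous_const _ _ (wstar _) (wstarD X) 0⟩

theorem WstarApproxConnesAmenable.eq_zero_of_mul_eq_zero [CompleteSpace X]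
    {S : BanachAlgStr (X →L[ℂ] ℂ)}
    (hA : IsDualBanachAlgebra (LinearIsometryEquiv.refl ℂ (X →L[ℂ] ℂ)) S)
    (H : WstarApproxConnesAmenable (LinearIsometryEquiv.refl ℂ (X →L[ℂ] ℂ)) S)
    {a : X →L[ℂ] ℂ} (ha : ∀ b, S.mul a b = 0) : a = 0 :=
  have := t2Space_wstarD X
  (H X S.toLeftBimodule hA.isNormal_toLeftBimodule _ S.isDerivationInto_id_toLeftBimodule
    (@continuous_id _ (wstarD X))).apply_eq_zero_of_act_eq_zero ha fun _ => rfl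

end LeftBimodule

theorem continuous_wstar_refl_apply {X : Type u} [NormedAddCommGroup X] [NormedSpace ℂ X]
    (x : X) :
    Continuous[wstar (LinearIsometryEquiv.refl ℂ (X →L[ℂ] ℂ)), inferInstance]
      fun a : X →L[ℂ] ℂ => a x :=
  topOfPairing_eval_cont _ x

theorem isDualBanachAlgebra_VfStr {X : Type u} [NormedAddCommGroup X] [NormedSpace ℂ X]
    (x₀ : X) (hn : ‖x₀‖ ≤ 1) :
    IsDualBanachAlgebra (LinearIsometryEquiv.refl ℂ (X →L[ℂ] ℂ)) (VfStr X x₀ hn) := by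
  let _ := wstar (LinearIsometryEquiv.refl ℂ (X →L[ℂ] ℂ))
  constructor <;> intro a <;> refine continuous_topOfPairing_iff.2 fun y => ?_ <;>
    simp only [VfStr_mul_apply, LinearIsometryEquiv.coe_refl, id, smul_apply, smul_eq_mul]
  · exact continuous_const.mul (continuous_wstar_refl_apply y)
  · exact (continuous_wstar_refl_apply x₀).mul continuous_const

theorem Vf_not_wstarApproxConnesAmenable_general {X : Type u} [NormedAddCommGroup X]
    [NormedSpace ℂ X] [CompleteSpace X] (x₀ : X) (hn : ‖x₀‖ ≤ 1)
    (hdim : 2 ≤ Module.rank ℂ (X →L[ℂ] ℂ)) :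
    ¬ WstarApproxConnesAmenable (LinearIsometryEquiv.refl ℂ (X →L[ℂ] ℂ))
        (VfStr X x₀ hn) := by
  intro H
  obtain ⟨a, ha, hax₀⟩ := exists_ne_zero_apply_eq_zero_of_two_le_rank
    (ContinuousLinearMap.apply ℂ ℂ x₀ : (X →L[ℂ] ℂ) →ₗ[ℂ] ℂ) hdim
  refine ha (H.eq_zero_of_mul_eq_zero (isDualBanachAlgebra_VfStr x₀ hn) fun b => ?_)
  rw [VfStr_mul_apply, show a x₀ = 0 from hax₀]
  exact zero_smul ℂ b

/-- **Proposition 4.6 (iii).** Let `X` be a complex Banach space, `V = X*` with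
`dim V ≥ 2`, and let `f` be the evaluation at a nonzero `x₀ ∈ X` with `‖x₀‖ ≤ 1`.  The
dual Banach algebra `V_f` (product `a b = f(a) • b`, predual `X`) is not
`w*`-approximately Connes amenable: there exist a normal dual Banach `V_f`-bimodule and
a `w*`-`w*` continuous derivation into it which is not `w*`-approximately inner. -/
theorem Vf_not_wstarApproxConnesAmenable {X : Type u} [NormedAddCommGroup X]
    [NormedSpace ℂ X] [CompleteSpace X] (x₀ : X) (hx₀ : x₀ ≠ 0) (hn : ‖x₀‖ ≤ 1)
    (hdim : 2 ≤ Module.rank ℂ (X →L[ℂ] ℂ)) :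
    ¬ WstarApproxConnesAmenable (LinearIsometryEquiv.refl ℂ (X →L[ℂ] ℂ))
        (VfStr X x₀ hn) :=
  Vf_not_wstarApproxConnesAmenable_general x₀ hn hdim
end
end
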